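/- Let n ≥ 2, k > 0, r₀ > 0 and β > 0. There is a constant c, depending only on n, k and β, with the following property: if μ is a finite Borel measure on ℂⁿ satisfying the wedge condition with constants k, r₀, then for every z = (s₁e^{iα₁},…,sₙe^{iαₙ}) ∈ ℂⁿ with s_j ≥ β for all j, and every γ with 0 < γ < min(r₀, β/4), one has μ({z}) = 0 and ∫_{W_γ(z)} ‖z−ζ‖^{2−2n} dμ(ζ) ≤ cγ, where W_γ(z) = ∏_{j=1}^n W(s_j,α_j,γ). -/

import Mathlib

open MeasureTheory Metric Complex Set

noncomputable section

/-- ℂⁿ, identified with ℝ^{2n} as a Euclidean space. -/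
abbrev Cn (n : ℕ) := EuclideanSpace ℂ (Fin n)

instance (n : ℕ) : MeasurableSpace (Cn n) := borel _
instance (n : ℕ) : BorelSpace (Cn n) := ⟨rfl⟩

/-- The truncated wedge W(s,α,γ) ⊆ ℂ. -/
def wedge (s α γ : ℝ) : Set ℂ :=
  {z | ∃ ρ φ : ℝ, 0 ≤ ρ ∧ |ρ - s| ≤ γ ∧ |φ - α| ≤ γ ∧ z = ρ * Complex.exp (Complex.I * φ)}

/-- The poly-wedge ∏_{j=1}^n W(s_j, α_j, γ) ⊆ ℂⁿ. -/
def polyWedge (n : ℕ) (s α : Fin n → ℝ) (γ : ℝ) : Set (Cn n) :=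
  {z | ∀ j, z j ∈ wedge (s j) (α j) γ}

/-- The wedge condition for a measure μ on ℂⁿ with constants k, r₀. -/
def WedgeCondition (n : ℕ) (μ : Measure (Cn n)) (k r₀ : ℝ) : Prop :=
  ∀ (s α : Fin n → ℝ), (∀ j, 0 ≤ s j) → (∀ j, α j ∈ Set.Ico 0 (2 * Real.pi)) →
    ∀ γ : ℝ, 0 < γ → γ < r₀ →
      μ (polyWedge n s α γ) ≤ ENNReal.ofReal (k * γ ^ (2 * n - 1))

/-- The constant c_{2n} = Γ(n-1)/(2π)ⁿ. -/
def newtonC (n : ℕ) : ℝ := Real.Gamma ((n : ℝ) - 1) / (2 * Real.pi) ^ n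

/-- The Newtonian potential of μ on ℂⁿ ≅ ℝ^{2n}. -/
def newtonPot (n : ℕ) (μ : Measure (Cn n)) (w : Cn n) : ℝ :=
  ∫ ζ, newtonC n * ‖w - ζ‖ ^ ((2 : ℝ) - 2 * n) ∂μ

/-- The Newtonian potential of μ, as a `ℝ≥0∞`-valued integral. -/
def newtonPotL (n : ℕ) (μ : Measure (Cn n)) (w : Cn n) : ENNReal :=
  ∫⁻ ζ, ENNReal.ofReal (newtonC n * ‖w - ζ‖ ^ ((2 : ℝ) - 2 * n)) ∂μ

/-- The point (s₁ e^{iα₁}, …, sₙ e^{iαₙ}) ∈ ℂⁿ. -/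
def mkPt (n : ℕ) (s α : Fin n → ℝ) : Cn n :=
  (WithLp.equiv 2 (Fin n → ℂ)).symm (fun j => (s j : ℂ) * Complex.exp (Complex.I * α j))

/-- The map Φ(θ, r, w₂, …, wₙ) = (r/√(1+Σ|w_j|²))·(e^{iθ}, e^{iθ}w̄₂, …, e^{iθ}w̄ₙ). -/
def Phi (n : ℕ) (θ r : ℝ) (w : Fin (n - 1) → ℂ) : Cn n :=
  (WithLp.equiv 2 (Fin n → ℂ)).symm (fun i =>
    ((r / Real.sqrt (1 + ∑ j, ‖w j‖ ^ 2) : ℝ) : ℂ) * Complex.exp (Complex.I * θ) *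
      (if h : (i : ℕ) = 0 then 1
       else (starRingEnd ℂ) (w ⟨(i : ℕ) - 1, by have := i.isLt; omega⟩)))

/-- The Stoltz domain C_{θ,r}: convex hull of {θ} ∪ closedBall 0 r. -/
def stoltz (n : ℕ) (θ : Cn n) (r : ℝ) : Set (Cn n) :=
  convexHull ℝ ({θ} ∪ closedBall 0 r)

/-- The Poisson kernel h_θ(w) = (1-‖w‖²)/‖θ-w‖^{2n} for the unit ball of ℂⁿ. -/
def poisson (n : ℕ) (θ w : Cn n) : ℝ :=
  (1 - ‖w‖ ^ 2) / ‖θ - w‖ ^ (2 * n)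

/-- u : 𝔹 → ℝ is pluriharmonic if it is the real part of a holomorphic function on 𝔹. -/
def Pluriharmonic (n : ℕ) (u : Cn n → ℝ) : Prop :=
  ∃ f : Cn n → ℂ, DifferentiableOn ℂ f (ball 0 1) ∧ ∀ z ∈ ball (0 : Cn n) 1, u z = (f z).re

end

noncomputable section

/-! Cut the poly-wedge `W_γ(z)` into the point `z` and the dyadic shells
`W_{γ/2^m} \ W_{γ/2^{m+1}}`. As `s_j ≥ β ≥ 4γ`, every point of the `m`-th shell lies at
distance at least `min 1 (β/π) · γ/2^{m+1}` from `z`, while the wedge condition bounds the mass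
of the shell by `k (γ/2^m)^{2n-1}`. The kernel `‖z - ζ‖^{2-2n}` therefore contributes
`O(γ/2^m)` on the `m`-th shell, and the geometric series sums to `O(γ)`. Letting the wedge
shrink to `z` gives `μ {z} = 0`. -/

open Filter Topology
open scoped Real

lemma norm_ofReal_mul_exp_sub_sq (ρ s φ α : ℝ) :
    ‖(ρ : ℂ) * Complex.exp (I * φ) - (s : ℂ) * Complex.exp (I * α)‖ ^ 2
      = ρ ^ 2 + s ^ 2 - 2 * ρ * s * Real.cos (φ - α) := by
  have h : (ρ : ℂ) * Complex.exp (I * φ) - (s : ℂ) * Complex.exp (I * α)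
      = ((ρ * Real.cos φ - s * Real.cos α : ℝ) : ℂ)
        + ((ρ * Real.sin φ - s * Real.sin α : ℝ) : ℂ) * I := by
    rw [mul_comm I (φ : ℂ), mul_comm I (α : ℂ), exp_mul_I, exp_mul_I, ← ofReal_cos, ← ofReal_sin,
      ← ofReal_cos, ← ofReal_sin]
    push_cast
    ring
  rw [h, Complex.sq_norm, normSq_add_mul_I, Real.cos_sub]
  linear_combination ρ ^ 2 * Real.sin_sq_add_cos_sq φ + s ^ 2 * Real.sin_sq_add_cos_sq α

lemma norm_exp_I_mul_sub_exp_I_mul_le (φ α : ℝ) :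
    ‖Complex.exp (I * φ) - Complex.exp (I * α)‖ ≤ |φ - α| := by
  have h : Complex.exp (I * φ) - Complex.exp (I * α)
      = Complex.exp (I * α) * (Complex.exp (I * ((φ - α : ℝ) : ℂ)) - 1) := by
    rw [mul_sub, ← Complex.exp_add]; push_cast; ring_nf
  rw [h, norm_mul, norm_exp_I_mul_ofReal, one_mul, ← Real.norm_eq_abs]
  exact Real.norm_exp_I_mul_ofReal_sub_one_le

lemma exists_abs_le_pi_exp_I_mul_eq (φ α : ℝ) :
    ∃ d : ℝ, |d| ≤ π ∧ Complex.exp (I * φ) = Complex.exp (I * (α + d : ℝ)) := by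
  refine ⟨toIocMod Real.two_pi_pos (-π) (φ - α), ?_, ?_⟩
  · have h := toIocMod_mem_Ioc Real.two_pi_pos (-π) (φ - α)
    rw [abs_le]; constructor <;> linarith [h.1, h.2]
  · rw [toIocMod, ← add_sub_assoc, add_sub_cancel, mul_comm I, mul_comm I]
    push_cast
    exact (exp_mul_I_periodic.sub_zsmul_eq _).symm

lemma isCompact_wedge (s α γ : ℝ) : IsCompact (wedge s α γ) := by
  have h : wedge s α γ = (fun p : ℝ × ℝ => (p.1 : ℂ) * Complex.exp (I * p.2)) ''
      ((Ici 0 ∩ Icc (s - γ) (s + γ)) ×ˢ Icc (α - γ) (α + γ)) := by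
    ext z
    simp only [wedge, mem_image, Prod.exists, mem_prod, mem_inter_iff, mem_Ici, mem_Icc, abs_le,
      mem_ofPred_eq]
    constructor
    · rintro ⟨ρ, φ, h0, ⟨h1, h2⟩, ⟨h3, h4⟩, rfl⟩
      exact ⟨ρ, φ, ⟨⟨h0, by linarith, by linarith⟩, by linarith, by linarith⟩, rfl⟩
    · rintro ⟨ρ, φ, ⟨⟨h0, h1, h2⟩, h3, h4⟩, rfl⟩
      exact ⟨ρ, φ, h0, ⟨by linarith, by linarith⟩, ⟨by linarith, by linarith⟩, rfl⟩
  rw [h]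
  exact ((isCompact_Icc.inter_left isClosed_Ici).prod isCompact_Icc).image (by fun_prop)

lemma norm_sub_le_of_mem_wedge {s α t : ℝ} {w : ℂ} (hw : w ∈ wedge s α t) :
    ‖w - s * Complex.exp (I * α)‖ ≤ t * (1 + s + t) := by
  obtain ⟨ρ, φ, hρ0, hρ, hφ, rfl⟩ := hw
  have hρ' : ρ ≤ s + t := by linarith [(abs_le.mp hρ).2]
  have h : (ρ : ℂ) * Complex.exp (I * φ) - s * Complex.exp (I * α)
      = ρ * (Complex.exp (I * φ) - Complex.exp (I * α))
        + ((ρ - s : ℝ) : ℂ) * Complex.exp (I * α) := by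
    push_cast; ring
  calc _ ≤ ρ * |φ - α| + |ρ - s| := by
        rw [h]
        refine (norm_add_le _ _).trans ?_
        rw [norm_mul, norm_mul, norm_exp_I_mul_ofReal, Complex.norm_real, Complex.norm_real,
          Real.norm_of_nonneg hρ0, Real.norm_eq_abs, mul_one]
        gcongr
        exact norm_exp_I_mul_sub_exp_I_mul_le φ α
    _ ≤ (s + t) * t + t := by gcongr; linarith [(abs_le.mp hρ).1]
    _ = t * (1 + s + t) := by ring

lemma eq_of_forall_mem_wedge {ι : Type*} {l : Filter ι} [l.NeBot] {s α : ℝ} {t : ι → ℝ}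
    (ht : Tendsto t l (𝓝 0)) {w : ℂ} (hw : ∀ i, w ∈ wedge s α (t i)) :
    w = s * Complex.exp (I * α) := by
  have hlim : Tendsto (fun i => t i * (1 + s + t i)) l (𝓝 0) := by
    simpa using ht.mul (tendsto_const_nhds.add ht)
  rw [← sub_eq_zero, ← norm_le_zero_iff]
  exact ge_of_tendsto' hlim fun i => norm_sub_le_of_mem_wedge (hw i)

lemma sq_sub_add_le_norm_sub_sq {ρ s α d : ℝ} (hρ : 0 ≤ ρ) (hs : 0 ≤ s) (hd : |d| ≤ π) :
    (ρ - s) ^ 2 + 4 * ρ * s * d ^ 2 / π ^ 2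
      ≤ ‖(ρ : ℂ) * Complex.exp (I * (α + d : ℝ)) - s * Complex.exp (I * α)‖ ^ 2 := by
  rw [norm_ofReal_mul_exp_sub_sq, add_sub_cancel_left]
  have hcos := Real.cos_le_one_sub_mul_cos_sq hd
  have hπ : 0 < π ^ 2 := by positivity
  have : 4 * ρ * s * d ^ 2 / π ^ 2 = 2 * ρ * s * (2 / π ^ 2 * d ^ 2) := by field_simp; ring
  rw [this]
  nlinarith [mul_nonneg hρ hs]

lemma le_norm_sub_of_mem_wedge_diff {β s α t : ℝ} {w : ℂ} (hs : β ≤ s) (ht : t ≤ β / 4)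
    (hw : w ∈ wedge s α t) (hw' : w ∉ wedge s α (t / 2)) :
    min 1 (β / π) * (t / 2) ≤ ‖w - s * Complex.exp (I * α)‖ := by
  obtain ⟨ρ, φ, hρ0, hρ, -, rfl⟩ := hw
  obtain ⟨d, hd, hexp⟩ := exists_abs_le_pi_exp_I_mul_eq φ α
  have ht0 : 0 ≤ t := (abs_nonneg _).trans hρ
  have hβ : 0 ≤ β := by linarith
  have hs0 : 0 ≤ s := by linarith
  -- `ρ ≥ s - t ≥ 3β/4`: this is where the lower bound on the moduli enters
  have hρs : β ^ 2 / 4 ≤ ρ * s := by nlinarith [(abs_le.mp hρ).1]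
  have hchord := sq_sub_add_le_norm_sub_sq hρ0 hs0 (α := α) hd
  rw [hexp] at hw' ⊢
  have hcases : t / 2 < |ρ - s| ∨ t / 2 < |d| := by
    by_contra! h
    exact hw' ⟨ρ, α + d, hρ0, h.1, by simpa using h.2, rfl⟩
  have hc : 0 ≤ min 1 (β / π) := le_min zero_le_one (by positivity)
  refine le_of_pow_le_pow_left₀ two_ne_zero (norm_nonneg _) (le_trans ?_ hchord)
  have hsq : 0 ≤ 4 * ρ * s * d ^ 2 / π ^ 2 := by have := mul_nonneg hρ0 hs0; positivity
  rcases hcases with hrad | hang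
  · have h1 : min 1 (β / π) * (t / 2) ≤ t / 2 :=
      mul_le_of_le_one_left (by linarith) (min_le_left _ _)
    have h2 : (t / 2) ^ 2 ≤ (ρ - s) ^ 2 := by rw [← sq_abs (ρ - s)]; gcongr
    nlinarith [mul_nonneg hc (by linarith : (0 : ℝ) ≤ t / 2)]
  · have h1 : min 1 (β / π) * (t / 2) ≤ β / π * (t / 2) := by gcongr; exact min_le_right _ _
    have hd2 : (t / 2) ^ 2 ≤ d ^ 2 := by rw [← sq_abs d]; gcongr
    have h2 : (β / π * (t / 2)) ^ 2 ≤ 4 * ρ * s * d ^ 2 / π ^ 2 :=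
      calc (β / π * (t / 2)) ^ 2 = β ^ 2 * (t / 2) ^ 2 / π ^ 2 := by ring
        _ ≤ 4 * ρ * s * d ^ 2 / π ^ 2 := by gcongr; nlinarith
    nlinarith [mul_nonneg hc (by linarith : (0 : ℝ) ≤ t / 2), sq_nonneg (ρ - s)]

lemma mkPt_mem_polyWedge {n : ℕ} {s : Fin n → ℝ} (α : Fin n → ℝ) (hs : ∀ j, 0 ≤ s j)
    {t : ℝ} (ht : 0 ≤ t) : mkPt n s α ∈ polyWedge n s α t :=
  fun j => ⟨s j, α j, hs j, by simpa using ht, by simpa using ht, rfl⟩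

lemma isClosed_polyWedge (n : ℕ) (s α : Fin n → ℝ) (γ : ℝ) : IsClosed (polyWedge n s α γ) := by
  have h : polyWedge n s α γ = ⋂ j, (fun z : Cn n => z j) ⁻¹' wedge (s j) (α j) γ := by
    ext z; simp [polyWedge]
  rw [h]
  exact isClosed_iInter fun j => (isCompact_wedge _ _ _).isClosed.preimage (by fun_prop)

lemma le_norm_mkPt_sub_of_mem_polyWedge_diff {n : ℕ} {s α : Fin n → ℝ} {β t : ℝ}
    (hs : ∀ j, β ≤ s j) (ht : t ≤ β / 4) {ζ : Cn n}
    (hζ : ζ ∈ polyWedge n s α t \ polyWedge n s α (t / 2)) :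
    min 1 (β / π) * (t / 2) ≤ ‖mkPt n s α - ζ‖ := by
  obtain ⟨j, hj⟩ : ∃ j, ζ j ∉ wedge (s j) (α j) (t / 2) := by
    simpa [polyWedge] using hζ.2
  calc _ ≤ ‖ζ j - s j * Complex.exp (I * α j)‖ :=
        le_norm_sub_of_mem_wedge_diff (hs j) ht (hζ.1 j) hj
    _ = ‖(ζ - mkPt n s α) j‖ := rfl
    _ ≤ ‖ζ - mkPt n s α‖ := PiLp.norm_apply_le _ j
    _ = ‖mkPt n s α - ζ‖ := norm_sub_rev _ _

lemma exists_mem_and_notMem_succ {X : Type*} {A : ℕ → Set X} {x : X} {N : ℕ}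
    (h₀ : x ∈ A 0) (hN : x ∉ A N) : ∃ m, x ∈ A m ∧ x ∉ A (m + 1) := by
  induction N with
  | zero => exact absurd h₀ hN
  | succ N ih => by_cases hx : x ∈ A N; exacts [⟨N, hx, hN⟩, ih hx]

lemma polyWedge_subset_union_iUnion (n : ℕ) (s α : Fin n → ℝ) (γ : ℝ) :
    polyWedge n s α γ ⊆ {mkPt n s α} ∪
      ⋃ m : ℕ, polyWedge n s α (γ / 2 ^ m) \ polyWedge n s α (γ / 2 ^ m / 2) := by
  intro ζ hζ
  by_cases h : ∀ m : ℕ, ζ ∈ polyWedge n s α (γ / 2 ^ m)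
  · left
    have hlim : Tendsto (fun m : ℕ => γ / 2 ^ m) atTop (𝓝 0) :=
      tendsto_const_nhds.div_atTop (tendsto_pow_atTop_atTop_of_one_lt one_lt_two)
    ext j
    exact eq_of_forall_mem_wedge hlim fun m => h m j
  · push Not at h
    obtain ⟨N, hN⟩ := h
    obtain ⟨m, hm, hm'⟩ := exists_mem_and_notMem_succ (A := fun m => polyWedge n s α (γ / 2 ^ m))
      (by simpa using hζ) hN
    rw [pow_succ, ← div_div] at hm'
    exact Or.inr (mem_iUnion.2 ⟨m, hm, hm'⟩)

namespace WedgeCondition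

variable {n : ℕ} {μ : Measure (Cn n)} {k r₀ : ℝ}

lemma measure_singleton_mkPt (hW : WedgeCondition n μ k r₀) (hn : 1 ≤ n) (hr₀ : 0 < r₀)
    {s α : Fin n → ℝ} (hs : ∀ j, 0 ≤ s j) (hα : ∀ j, α j ∈ Ico 0 (2 * π)) :
    μ {mkPt n s α} = 0 := by
  have hle : ∀ᶠ t in 𝓝[>] 0, μ {mkPt n s α} ≤ ENNReal.ofReal (k * t ^ (2 * n - 1)) := by
    filter_upwards [Ioo_mem_nhdsGT hr₀] with t ht
    exact (measure_mono (singleton_subset_iff.2 (mkPt_mem_polyWedge α hs ht.1.le))).trans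
      (hW s α hs hα t ht.1 ht.2)
  have hlim : Tendsto (fun t : ℝ => ENNReal.ofReal (k * t ^ (2 * n - 1))) (𝓝[>] 0) (𝓝 0) := by
    have : Tendsto (fun t : ℝ => k * t ^ (2 * n - 1)) (𝓝 0) (𝓝 0) := by
      have hc : Continuous fun t : ℝ => k * t ^ (2 * n - 1) := by fun_prop
      simpa [zero_pow (by omega : 2 * n - 1 ≠ 0)] using hc.tendsto 0
    simpa using ENNReal.tendsto_ofReal (this.mono_left nhdsWithin_le_nhds)
  exact le_antisymm (ge_of_tendsto hlim hle) zero_le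

lemma setLIntegral_polyWedge_diff_le (hW : WedgeCondition n μ k r₀) (hn : 1 ≤ n)
    {s α : Fin n → ℝ} {β t : ℝ} (hs : ∀ j, β ≤ s j) (hα : ∀ j, α j ∈ Ico 0 (2 * π))
    (ht : 0 < t) (htr : t < r₀) (htβ : t ≤ β / 4) :
    ∫⁻ ζ in polyWedge n s α t \ polyWedge n s α (t / 2),
        ENNReal.ofReal (‖mkPt n s α - ζ‖ ^ ((2 : ℝ) - 2 * n)) ∂μ
      ≤ ENNReal.ofReal (k * (min 1 (β / π) / 2) ^ ((2 : ℝ) - 2 * n) * t) := by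
  set c := min 1 (β / π)
  have hc : 0 < c := lt_min one_pos (div_pos (by linarith) Real.pi_pos)
  have hexp : (2 : ℝ) - 2 * n ≤ 0 := by
    have : (1 : ℝ) ≤ n := by exact_mod_cast hn
    linarith
  have hs0 : ∀ j, 0 ≤ s j := fun j => by linarith [hs j]
  have hshell : MeasurableSet (polyWedge n s α t \ polyWedge n s α (t / 2)) :=
    (isClosed_polyWedge n s α t).measurableSet.diff (isClosed_polyWedge n s α _).measurableSet
  have hscale : (c * (t / 2)) ^ ((2 : ℝ) - 2 * n) * (k * t ^ (2 * n - 1))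
      = k * (c / 2) ^ ((2 : ℝ) - 2 * n) * t := by
    have hcast : ((2 * n - 1 : ℕ) : ℝ) = 2 * n - 1 := by
      rw [Nat.cast_sub (by omega)]; push_cast; ring
    rw [show c * (t / 2) = c / 2 * t by ring, Real.mul_rpow (by positivity) ht.le,
      ← Real.rpow_natCast, hcast]
    calc _ = k * (c / 2) ^ ((2 : ℝ) - 2 * n) * (t ^ ((2 : ℝ) - 2 * n) * t ^ (2 * (n : ℝ) - 1)) := by
          ring
      _ = _ := by rw [← Real.rpow_add ht]; norm_num
  calc _ ≤ ∫⁻ _ in polyWedge n s α t \ polyWedge n s α (t / 2),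
          ENNReal.ofReal ((c * (t / 2)) ^ ((2 : ℝ) - 2 * n)) ∂μ :=
        setLIntegral_mono' hshell fun ζ hζ => ENNReal.ofReal_le_ofReal <|
          Real.rpow_le_rpow_of_nonpos (by positivity)
            (le_norm_mkPt_sub_of_mem_polyWedge_diff hs htβ hζ) hexp
    _ ≤ ENNReal.ofReal ((c * (t / 2)) ^ ((2 : ℝ) - 2 * n))
          * ENNReal.ofReal (k * t ^ (2 * n - 1)) := by
        rw [setLIntegral_const]
        gcongr
        exact (measure_mono sdiff_subset).trans (hW s α hs0 hα t ht htr)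
    _ = _ := by rw [← ENNReal.ofReal_mul (by positivity), hscale]

end WedgeCondition

lemma tsum_ofReal_div_two_pow (a : ℝ) :
    ∑' m : ℕ, ENNReal.ofReal (a / 2 ^ m) = ENNReal.ofReal (2 * a) := by
  have h (m : ℕ) : ENNReal.ofReal (a / 2 ^ m) = ENNReal.ofReal a * 2⁻¹ ^ m := by
    rw [ENNReal.ofReal_div_of_pos (by positivity), ENNReal.ofReal_pow zero_le_two,
      ENNReal.ofReal_ofNat, div_eq_mul_inv, ENNReal.inv_pow]
  rw [tsum_congr h, ENNReal.tsum_mul_left, ENNReal.tsum_geometric_two, mul_comm,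
    ENNReal.ofReal_mul zero_le_two, ENNReal.ofReal_ofNat]

theorem stmt5_general (n : ℕ) (hn : 2 ≤ n) (k β : ℝ) :
    ∃ c : ℝ, ∀ r₀ : ℝ, 0 < r₀ → ∀ μ : Measure (Cn n), IsFiniteMeasure μ →
      WedgeCondition n μ k r₀ →
      ∀ s α : Fin n → ℝ, (∀ j, β ≤ s j) → (∀ j, α j ∈ Set.Ico (0 : ℝ) (2 * Real.pi)) →
        ∀ γ : ℝ, 0 < γ → γ < min r₀ (β / 4) →
          μ {mkPt n s α} = 0 ∧
          ∫⁻ ζ in polyWedge n s α γ, ENNReal.ofReal (‖mkPt n s α - ζ‖ ^ ((2 : ℝ) - 2 * n)) ∂μ ≤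
            ENNReal.ofReal (c * γ) := by
  set K := k * (min 1 (β / π) / 2) ^ ((2 : ℝ) - 2 * n)
  refine ⟨2 * K, fun r₀ hr₀ μ _ hW s α hs hα γ hγ hγlt => ?_⟩
  obtain ⟨hγr, hγβ⟩ := lt_min_iff.mp hγlt
  have hs0 : ∀ j, 0 ≤ s j := fun j => by linarith [hs j]
  have hpt := hW.measure_singleton_mkPt (by omega) hr₀ hs0 hα
  refine ⟨hpt, ?_⟩
  have hdyadic : ∀ m : ℕ, γ / 2 ^ m ≤ γ := fun m => div_le_self hγ.le (one_le_pow₀ one_le_two)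
  calc _ ≤ ∫⁻ ζ in {mkPt n s α} ∪
            ⋃ m : ℕ, polyWedge n s α (γ / 2 ^ m) \ polyWedge n s α (γ / 2 ^ m / 2),
          ENNReal.ofReal (‖mkPt n s α - ζ‖ ^ ((2 : ℝ) - 2 * n)) ∂μ :=
        lintegral_mono_set (polyWedge_subset_union_iUnion n s α γ)
    _ = ∫⁻ ζ in ⋃ m : ℕ, polyWedge n s α (γ / 2 ^ m) \ polyWedge n s α (γ / 2 ^ m / 2),
          ENNReal.ofReal (‖mkPt n s α - ζ‖ ^ ((2 : ℝ) - 2 * n)) ∂μ :=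
        setLIntegral_congr (union_ae_eq_right.2 (measure_mono_null sdiff_subset hpt))
    _ ≤ ∑' m : ℕ, ENNReal.ofReal (K * γ / 2 ^ m) := by
        refine (lintegral_iUnion_le _ _).trans (ENNReal.tsum_le_tsum fun m => ?_)
        rw [mul_div_assoc]
        exact hW.setLIntegral_polyWedge_diff_le (by omega) hs hα (by positivity)
          ((hdyadic m).trans_lt hγr) ((hdyadic m).trans (by linarith))
    _ = ENNReal.ofReal (2 * K * γ) := by rw [tsum_ofReal_div_two_pow, ← mul_assoc]

theorem stmt5 (n : ℕ) (hn : 2 ≤ n) (k β : ℝ) (hk : 0 < k) (hβ : 0 < β) :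
    ∃ c : ℝ, ∀ r₀ : ℝ, 0 < r₀ → ∀ μ : Measure (Cn n), IsFiniteMeasure μ →
      WedgeCondition n μ k r₀ →
      ∀ s α : Fin n → ℝ, (∀ j, β ≤ s j) → (∀ j, α j ∈ Set.Ico (0 : ℝ) (2 * Real.pi)) →
        ∀ γ : ℝ, 0 < γ → γ < min r₀ (β / 4) →
          μ {mkPt n s α} = 0 ∧
          ∫⁻ ζ in polyWedge n s α γ, ENNReal.ofReal (‖mkPt n s α - ζ‖ ^ ((2 : ℝ) - 2 * n)) ∂μ ≤
            ENNReal.ofReal (c * γ) :=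
  stmt5_general n hn k β
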